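/- For every complex z with Re(z) ≤ 0 and |z| ≤ 1, one has |r₀(z/2)² - exp(z)| ≤ (6/8)|z|², where r₀(w) = 1/(1-w). -/

import Mathlib

noncomputable def r₀ (w : ℂ) : ℂ := 1 / (1 - w)

/-!
On the closed left half-plane `‖exp‖ ≤ 1`, so the mean value inequality gives
`‖e^w - 1‖ ≤ ‖w‖`, and one more integration along `t ↦ t w` gives `‖e^w - 1 - w‖ ≤ ‖w‖² / 2`;
there also `‖1 - w‖ ≥ 1`, so `‖r₀ w‖ ≤ 1`. Since
`r₀ w - e^w = r₀ w (w (e^w - 1) - (e^w - 1 - w))`, this yields `‖r₀ w - e^w‖ ≤ (3/2) ‖w‖²`.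
For `w = z / 2` the factorization `r₀(w)² - e^z = (r₀ w - e^w)(r₀ w + e^w)`, whose second factor
has norm at most 2, gives the bound.
-/

open Complex Set

theorem Complex.norm_exp_le_one_of_re_nonpos {w : ℂ} (hw : w.re ≤ 0) : ‖exp w‖ ≤ 1 := by
  rw [norm_exp]
  exact Real.exp_le_one_iff.mpr hw

theorem Complex.norm_exp_sub_one_le_of_re_nonpos {w : ℂ} (hw : w.re ≤ 0) :
    ‖exp w - 1‖ ≤ ‖w‖ := by
  have h := (convex_halfSpace_re_le (0 : ℝ)).norm_image_sub_le_of_norm_hasDerivWithin_le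
    (f := exp) (C := 1) (fun u _ => (hasDerivAt_exp u).hasDerivWithinAt)
    (fun u hu => norm_exp_le_one_of_re_nonpos hu) (x := 0) (y := w)
    (show (0 : ℂ) ∈ {c : ℂ | c.re ≤ 0} by simp) hw
  simpa using h

theorem Complex.norm_exp_sub_one_sub_self_le_of_re_nonpos {w : ℂ} (hw : w.re ≤ 0) :
    ‖exp w - 1 - w‖ ≤ ‖w‖ ^ 2 / 2 := by
  let f : ℝ → ℂ := fun t => exp (t * w) - 1 - t * w
  have hf : ∀ t : ℝ, HasDerivAt f (w * (exp (t * w) - 1)) t := by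
    intro t
    have h := (((hasDerivAt_id' (t : ℂ)).mul_const w).cexp.sub_const 1).sub
      ((hasDerivAt_id' (t : ℂ)).mul_const w)
    exact h.comp_ofReal.congr_deriv (by ring)
  have hB : ∀ t : ℝ, HasDerivAt (fun t : ℝ => ‖w‖ ^ 2 / 2 * t ^ 2) (t * ‖w‖ ^ 2) t := by
    intro t
    exact ((hasDerivAt_pow 2 t).const_mul (‖w‖ ^ 2 / 2)).congr_deriv (by norm_num; ring)
  have bound : ∀ t ∈ Ico (0 : ℝ) 1, ‖w * (exp (t * w) - 1)‖ ≤ t * ‖w‖ ^ 2 := by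
    intro t ht
    have htw : (t * w).re ≤ 0 := by
      simpa using mul_nonpos_of_nonneg_of_nonpos ht.1 hw
    calc ‖w * (exp (t * w) - 1)‖ ≤ ‖w‖ * ‖(t : ℂ) * w‖ := by
          rw [norm_mul]; gcongr; exact norm_exp_sub_one_le_of_re_nonpos htw
      _ = t * ‖w‖ ^ 2 := by
          rw [norm_mul, norm_real, Real.norm_of_nonneg ht.1]; ring
  have := image_norm_le_of_norm_deriv_right_le_deriv_boundary
    (fun t _ => (hf t).continuousAt.continuousWithinAt) (fun t _ => (hf t).hasDerivWithinAt)
    (by simp [f]) hB bound (right_mem_Icc.2 zero_le_one)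
  simpa [f] using this

theorem one_le_norm_one_sub_of_re_nonpos {w : ℂ} (hw : w.re ≤ 0) : 1 ≤ ‖1 - w‖ :=
  calc (1 : ℝ) ≤ (1 - w).re := by simp; linarith
    _ ≤ ‖1 - w‖ := re_le_norm _

theorem norm_r₀_le_one {w : ℂ} (hw : w.re ≤ 0) : ‖r₀ w‖ ≤ 1 := by
  rw [r₀, norm_div, norm_one]
  exact div_le_one_of_le₀ (one_le_norm_one_sub_of_re_nonpos hw) (norm_nonneg _)

theorem norm_r₀_sub_exp_le {w : ℂ} (hw : w.re ≤ 0) :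
    ‖r₀ w - exp w‖ ≤ 3 / 2 * ‖w‖ ^ 2 := by
  have hne : 1 - w ≠ 0 := norm_pos_iff.mp (one_pos.trans_le (one_le_norm_one_sub_of_re_nonpos hw))
  have hsplit : r₀ w - exp w = r₀ w * (w * (exp w - 1) - (exp w - 1 - w)) := by
    rw [r₀]; field_simp; ring
  calc ‖r₀ w - exp w‖ ≤ 1 * (‖w‖ * ‖w‖ + ‖w‖ ^ 2 / 2) := by
        rw [hsplit, norm_mul]
        gcongr
        · exact norm_r₀_le_one hw
        · refine (norm_sub_le _ _).trans (add_le_add ?_ ?_)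
          · rw [norm_mul]; gcongr; exact norm_exp_sub_one_le_of_re_nonpos hw
          · exact norm_exp_sub_one_sub_self_le_of_re_nonpos hw
    _ = 3 / 2 * ‖w‖ ^ 2 := by ring

theorem implicit_euler_sq_error_bound_general (z : ℂ) (hre : z.re ≤ 0) :
    ‖r₀ (z / 2) ^ 2 - Complex.exp z‖ ≤ (6 / 8) * (‖z‖) ^ 2 := by
  have hw : (z / 2).re ≤ 0 := by simp; linarith
  have hexp : exp z = exp (z / 2) ^ 2 := by rw [← exp_nat_mul]; ring_nf
  calc ‖r₀ (z / 2) ^ 2 - exp z‖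
      = ‖r₀ (z / 2) - exp (z / 2)‖ * ‖r₀ (z / 2) + exp (z / 2)‖ := by
        rw [hexp, sq_sub_sq, norm_mul, mul_comm]
    _ ≤ 3 / 2 * ‖z / 2‖ ^ 2 * (1 + 1) := by
        gcongr
        · exact norm_r₀_sub_exp_le hw
        · exact (norm_add_le _ _).trans
            (add_le_add (norm_r₀_le_one hw) (norm_exp_le_one_of_re_nonpos hw))
    _ = 6 / 8 * ‖z‖ ^ 2 := by rw [norm_div, Complex.norm_two]; ring

theorem implicit_euler_sq_error_bound (z : ℂ) (hre : z.re ≤ 0) (habs : ‖z‖ ≤ 1) :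
    ‖r₀ (z / 2) ^ 2 - Complex.exp z‖ ≤ (6 / 8) * (‖z‖) ^ 2 :=
  implicit_euler_sq_error_bound_general z hre
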